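/- Let U ⊆ ℝⁿ be open and let Γ be a countable subgroup of Aff(ℝⁿ). If F : ℝⁿ → ℝⁿ is smooth on U and for every r ∈ U there exists γ ∈ Γ with F(r) = γ(r), then for every r ∈ U there exist an open neighborhood V of r with V ⊆ U and an element γ ∈ Γ such that F(s) = γ(s) for all s ∈ V; that is, F is everywhere locally equal to the action of some element of Γ. -/

import Mathlib

open Set Filter Topology Metric

namespace LiftIdentityAux

variable {n : ℕ}

local notation "E" => EuclideanSpace ℝ (Fin n)

/-- The linear part of an affine equivalence, as a continuous linear map. -/
noncomputable def lin (δ : E ≃ᵃ[ℝ] E) : E →L[ℝ] E :=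
  LinearMap.toContinuousLinearMap (δ.linear : E →ₗ[ℝ] E)

lemma lin_apply (δ : E ≃ᵃ[ℝ] E) (v : E) : lin δ v = δ.linear v := by
  simp [lin]

lemma aff_apply (δ : E ≃ᵃ[ℝ] E) (p y : E) : δ y = δ.linear (y - p) + δ p := by
  have h := δ.map_vadd p (y - p)
  simpa [vadd_eq_add, sub_add_cancel] using h

lemma aff_continuous (δ : E ≃ᵃ[ℝ] E) : Continuous (⇑δ : E → E) := by
  have := δ.toAffineMap.continuous_of_finiteDimensional
  rwa [AffineEquiv.coe_toAffineMap] at this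

lemma aff_hasFDerivAt (δ : E ≃ᵃ[ℝ] E) (y : E) : HasFDerivAt (⇑δ) (lin δ) y := by
  have hfun : (⇑δ : E → E) = fun x => lin δ x + (δ y - lin δ y) := by
    funext x
    rw [aff_apply δ y x]
    simp only [lin_apply, map_sub]
    abel
  rw [hfun]
  exact ((lin δ).hasFDerivAt).add_const _

lemma aff_eq_of (δ δ' : E ≃ᵃ[ℝ] E) (p : E) (h1 : δ p = δ' p) (h2 : lin δ = lin δ') :
    (⇑δ : E → E) = ⇑δ' := by
  funext y
  rw [aff_apply δ p y, aff_apply δ' p y, h1, ← lin_apply, ← lin_apply, h2]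

lemma aff_eq_of_eventuallyEq (δ δ' : E ≃ᵃ[ℝ] E) {s : E}
    (hev : (⇑δ : E → E) =ᶠ[𝓝 s] ⇑δ') : (⇑δ : E → E) = ⇑δ' := by
  have h1 : δ s = δ' s := hev.eq_of_nhds
  have h2 : lin δ = lin δ' := by
    have := hev.fderiv_eq (𝕜 := ℝ)
    rwa [(aff_hasFDerivAt δ s).fderiv, (aff_hasFDerivAt δ' s).fderiv] at this
  exact aff_eq_of _ _ s h1 h2

lemma eq_at_closure {X Y : Type*} [TopologicalSpace X] [TopologicalSpace Y] [T2Space Y]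
    {f g : X → Y} {s : Set X} {x : X} (h : ∀ y ∈ s, f y = g y) (hx : x ∈ closure s)
    (hf : ContinuousAt f x) (hg : ContinuousAt g x) : f x = g x := by
  haveI : (𝓝[s] x).NeBot := mem_closure_iff_nhdsWithin_neBot.mp hx
  refine tendsto_nhds_unique (l := 𝓝[s] x) (hf.tendsto.mono_left nhdsWithin_le_nhds) ?_
  exact (hg.tendsto.mono_left nhdsWithin_le_nhds).congr'
    (eventually_mem_nhdsWithin.mono fun y hy => (h y hy).symm)

/-- `F` agrees with a single element of `Γ` near `s`. -/
def LocEq (Γ : Subgroup (E ≃ᵃ[ℝ] E)) (F : E → E) (s : E) : Prop :=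
  ∃ γ ∈ Γ, ∀ᶠ y in 𝓝 s, F y = γ y

lemma isOpen_locEq (Γ : Subgroup (E ≃ᵃ[ℝ] E)) (F : E → E) :
    IsOpen {s : E | LocEq Γ F s} := by
  refine isOpen_iff_forall_mem_open.mpr ?_
  rintro s ⟨γ, hγ, hev⟩
  rcases _root_.eventually_nhds_iff.mp hev with ⟨t, htF, hto, hst⟩
  exact ⟨t, fun y hy => ⟨γ, hγ, _root_.eventually_nhds_iff.mpr ⟨t, htF, hto, hy⟩⟩, hto, hst⟩

lemma germ_const (Γ : Subgroup (E ≃ᵃ[ℝ] E)) (F : E → E) (x p : E)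
    (hseg : ∀ t ∈ Ico (0:ℝ) 1, LocEq Γ F (x + t • (p - x))) :
    ∃ δ ∈ Γ, ∀ t ∈ Ico (0:ℝ) 1, ∀ᶠ y in 𝓝 (x + t • (p - x)), F y = δ y := by
  obtain ⟨δ₀, hδ₀Γ, hev₀⟩ := hseg 0 ⟨le_refl 0, zero_lt_one⟩
  set ℓ : ℝ → E := fun t => x + t • (p - x) with hℓdef
  have hℓc : Continuous ℓ := by fun_prop
  set u : Set ℝ := ℓ ⁻¹' {s : E | ∀ᶠ y in 𝓝 s, F y = δ₀ y} with hu
  set v : Set ℝ :=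
    ℓ ⁻¹' (⋃ δ ∈ {δ : E ≃ᵃ[ℝ] E | (⇑δ : E → E) ≠ ⇑δ₀}, {s : E | ∀ᶠ y in 𝓝 s, F y = δ y}) with hv
  have huo : IsOpen u := isOpen_setOf_eventually_nhds.preimage hℓc
  have hvo : IsOpen v :=
    (isOpen_biUnion fun δ _ => isOpen_setOf_eventually_nhds).preimage hℓc
  have hdisj : Disjoint u v := by
    rw [Set.disjoint_left]
    intro t htu htv
    simp only [hv, mem_preimage, mem_iUnion, exists_prop] at htv
    obtain ⟨δ, hδne, hevδ⟩ := htv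
    exact hδne (aff_eq_of_eventuallyEq δ δ₀
      ((hevδ.and htu).mono fun y hy => hy.1.symm.trans hy.2))
  have hcover : Ico (0:ℝ) 1 ⊆ u ∪ v := by
    intro t ht
    obtain ⟨δ, hδΓ, hev⟩ := hseg t ht
    by_cases hc : (⇑δ : E → E) = ⇑δ₀
    · left
      exact hev.mono fun y hy => hy.trans (congrFun hc y)
    · right
      simp only [hv, mem_preimage, mem_iUnion, exists_prop]
      exact ⟨δ, hc, hev⟩
  have hne : (Ico (0:ℝ) 1 ∩ u).Nonempty := ⟨0, ⟨le_refl 0, zero_lt_one⟩, hev₀⟩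
  have := isPreconnected_Ico.subset_left_of_subset_union huo hvo hdisj hcover hne
  exact ⟨δ₀, hδ₀Γ, fun t ht => this ht⟩

lemma germ_jet {U : Set E} (hU : IsOpen U) {F : E → E} (hF : ContDiffOn ℝ (⊤ : ℕ∞) F U)
    {x p : E} (hpU : p ∈ U) (δ : E ≃ᵃ[ℝ] E)
    (hg : ∀ t ∈ Ico (0:ℝ) 1, ∀ᶠ y in 𝓝 (x + t • (p - x)), F y = δ y) :
    F x = δ x ∧ F p = δ p ∧ fderiv ℝ F p = lin δ := by
  have hx : F x = δ x := by
    have := (hg 0 ⟨le_refl 0, zero_lt_one⟩).self_of_nhds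
    simpa using this
  set ℓ : ℝ → E := fun t => x + t • (p - x) with hℓdef
  have hℓc : Continuous ℓ := by fun_prop
  have hne : (𝓝[Ico (0:ℝ) 1] 1).NeBot := by
    refine mem_closure_iff_nhdsWithin_neBot.mp ?_
    rw [closure_Ico (zero_ne_one (α := ℝ))]
    exact ⟨zero_le_one, le_refl 1⟩
  have hℓ1 : ℓ 1 = p := by simp [hℓdef]
  have hℓt : Tendsto ℓ (𝓝[Ico (0:ℝ) 1] 1) (𝓝 p) := by
    have := hℓc.tendsto 1
    rw [hℓ1] at this
    exact this.mono_left nhdsWithin_le_nhds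
  have hFδ : ∀ᶠ t in 𝓝[Ico (0:ℝ) 1] 1, F (ℓ t) = δ (ℓ t) :=
    eventually_mem_nhdsWithin.mono fun t ht => (hg t ht).self_of_nhds
  have hFp : F p = δ p := by
    have hcF : ContinuousAt F p := hF.continuousOn.continuousAt (hU.mem_nhds hpU)
    have h1 : Tendsto (fun t => F (ℓ t)) (𝓝[Ico (0:ℝ) 1] 1) (𝓝 (F p)) := hcF.tendsto.comp hℓt
    have h2 : Tendsto (fun t => δ (ℓ t)) (𝓝[Ico (0:ℝ) 1] 1) (𝓝 (δ p)) :=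
      (aff_continuous δ).continuousAt.tendsto.comp hℓt
    exact tendsto_nhds_unique h1 (h2.congr' (hFδ.mono fun t ht => ht.symm))
  have hfd : ∀ t ∈ Ico (0:ℝ) 1, fderiv ℝ F (ℓ t) = lin δ := by
    intro t ht
    have hevt : F =ᶠ[𝓝 (ℓ t)] ⇑δ := hg t ht
    rw [hevt.fderiv_eq, (aff_hasFDerivAt δ (ℓ t)).fderiv]
  have hcfd : ContinuousAt (fderiv ℝ F) p :=
    (hF.continuousOn_fderiv_of_isOpen hU (by simp)).continuousAt (hU.mem_nhds hpU)
  have h1 : Tendsto (fun t => fderiv ℝ F (ℓ t)) (𝓝[Ico (0:ℝ) 1] 1) (𝓝 (fderiv ℝ F p)) :=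
    hcfd.tendsto.comp hℓt
  have h2 : Tendsto (fun t => fderiv ℝ F (ℓ t)) (𝓝[Ico (0:ℝ) 1] 1) (𝓝 (lin δ)) :=
    tendsto_const_nhds.congr' (eventually_mem_nhdsWithin.mono fun t ht => (hfd t ht).symm)
  exact ⟨hx, hFp, tendsto_nhds_unique h1 h2⟩

lemma seg_zero {U : Set E} (hU : IsOpen U) {F : E → E} (hF : ContDiffOn ℝ (⊤ : ℕ∞) F U)
    (Γ : Subgroup (E ≃ᵃ[ℝ] E)) (γ₀ : E ≃ᵃ[ℝ] E) {p q : E}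
    (hsub : segment ℝ p q ⊆ U)
    (hdisj : ∀ s ∈ segment ℝ p q, LocEq Γ F s ∨ F s = γ₀ s)
    (hp : F p = γ₀ p) (hq : F q = γ₀ q) :
    ∀ s ∈ segment ℝ p q, F s = γ₀ s := by
  set ℓ : ℝ → E := fun t => p + t • (q - p) with hℓdef
  have hℓc : Continuous ℓ := by fun_prop
  have hmem : ∀ t ∈ Icc (0:ℝ) 1, ℓ t ∈ segment ℝ p q := by
    intro t ht
    rw [segment_eq_image']
    exact mem_image_of_mem _ ht
  suffices hmain : ∀ t ∈ Icc (0:ℝ) 1, F (ℓ t) = γ₀ (ℓ t) by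
    intro s hs
    rw [segment_eq_image'] at hs
    obtain ⟨t, ht, rfl⟩ := hs
    exact hmain t ht
  intro tstar hts
  by_cases hloc : ¬ LocEq Γ F (ℓ tstar)
  · rcases hdisj _ (hmem _ hts) with hL | hR
    · exact absurd hL hloc
    · exact hR
  push_neg at hloc
  rcases eq_or_lt_of_le hts.1 with h0 | h0pos
  · rw [← h0]
    simpa [hℓdef] using hp
  rcases eq_or_lt_of_le hts.2 with h1 | h1lt
  · rw [h1]
    simpa [hℓdef] using hq
  -- closed "bad" set
  set Aset : Set ℝ := (Icc (0:ℝ) 1 ∩ ℓ ⁻¹' {s : E | LocEq Γ F s}ᶜ) ∪ {0, 1} with hA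
  have hAclosed : IsClosed Aset := by
    refine IsClosed.union (isClosed_Icc.inter ?_) ?_
    · exact (isOpen_locEq Γ F).isClosed_compl.preimage hℓc
    · exact ((Set.finite_singleton (1:ℝ)).insert 0).isClosed
  have hAsub : Aset ⊆ Icc 0 1 := by
    rintro t (⟨h, _⟩ | h)
    · exact h
    · rcases h with rfl | h
      · exact ⟨le_refl 0, zero_le_one⟩
      · rcases h with rfl
        exact ⟨zero_le_one, le_refl 1⟩
  have h0A : (0:ℝ) ∈ Aset := Or.inr (by simp)
  have h1A : (1:ℝ) ∈ Aset := Or.inr (by simp)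
  have htsA : tstar ∉ Aset := by
    rintro (⟨_, hmem'⟩ | hmem')
    · exact hmem' hloc
    · rcases hmem' with rfl | hmem'
      · exact lt_irrefl _ h0pos
      · rcases hmem' with rfl
        exact lt_irrefl _ h1lt
  set α := sSup (Aset ∩ Iic tstar) with hαdef
  set β := sInf (Aset ∩ Ici tstar) with hβdef
  have hαne : (Aset ∩ Iic tstar).Nonempty := ⟨0, h0A, hts.1⟩
  have hβne : (Aset ∩ Ici tstar).Nonempty := ⟨1, h1A, hts.2⟩
  have hαbdd : BddAbove (Aset ∩ Iic tstar) := ⟨tstar, fun y hy => hy.2⟩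
  have hβbdd : BddBelow (Aset ∩ Ici tstar) := ⟨tstar, fun y hy => hy.2⟩
  have hαmem : α ∈ Aset ∩ Iic tstar := (hAclosed.inter isClosed_Iic).csSup_mem hαne hαbdd
  have hβmem : β ∈ Aset ∩ Ici tstar := (hAclosed.inter isClosed_Ici).csInf_mem hβne hβbdd
  have hα : α < tstar := lt_of_le_of_ne hαmem.2 fun h => htsA (h ▸ hαmem.1)
  have hβ : tstar < β := lt_of_le_of_ne hβmem.2 fun h => htsA (h ▸ hβmem.1)
  have hα0 : 0 ≤ α := (hAsub hαmem.1).1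
  have hβ1 : β ≤ 1 := (hAsub hβmem.1).2
  have hαβ : α < β := lt_trans hα hβ
  have hmid : ∀ t ∈ Ioo α β, LocEq Γ F (ℓ t) := by
    intro t ht
    have htI : t ∈ Icc (0:ℝ) 1 :=
      ⟨le_of_lt (lt_of_le_of_lt hα0 ht.1), le_of_lt (lt_of_lt_of_le ht.2 hβ1)⟩
    have htA : t ∉ Aset := by
      intro hA'
      rcases le_total t tstar with hle | hle
      · exact absurd (le_csSup hαbdd ⟨hA', hle⟩) (not_le.mpr ht.1)
      · exact absurd (csInf_le hβbdd ⟨hA', hle⟩) (not_le.mpr ht.2)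
    by_contra hnl
    exact htA (Or.inl ⟨htI, hnl⟩)
  have hgA : ∀ t ∈ Aset, F (ℓ t) = γ₀ (ℓ t) := by
    intro t htA'
    rcases htA' with ⟨htI, hnl⟩ | hte
    · rcases hdisj _ (hmem _ htI) with hL | hR
      · exact absurd hL hnl
      · exact hR
    · rcases hte with rfl | hte
      · simpa [hℓdef] using hp
      · rcases hte with rfl
        simpa [hℓdef] using hq
  have hℓU : ∀ t ∈ Icc (0:ℝ) 1, ℓ t ∈ U := fun t ht => hsub (hmem t ht)
  have hldgen : ∀ s : ℝ, HasDerivAt ℓ (q - p) s := by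
    intro s
    have h1 : HasDerivAt (fun r : ℝ => r • (q - p)) ((1:ℝ) • (q - p)) s :=
      (hasDerivAt_id s).smul_const (q - p)
    rw [one_smul] at h1
    exact h1.const_add p
  set g : ℝ → E := fun s => F (ℓ s) - γ₀ (ℓ s) with hgdef
  set G' : ℝ → E := fun t => fderiv ℝ F (ℓ t) (q - p) - lin γ₀ (q - p) with hG'def
  have hdiff : ∀ t ∈ Icc (0:ℝ) 1, HasDerivAt g (G' t) t := by
    intro t ht
    have hFd : HasFDerivAt F (fderiv ℝ F (ℓ t)) (ℓ t) :=
      ((hF.differentiableOn (by simp)).differentiableAt (hU.mem_nhds (hℓU t ht))).hasFDerivAt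
    exact (hFd.comp_hasDerivAt t (hldgen t)).sub
      ((aff_hasFDerivAt γ₀ (ℓ t)).comp_hasDerivAt t (hldgen t))
  have hIsub : Ioo α β ⊆ Icc (0:ℝ) 1 := fun t ht =>
    ⟨le_trans hα0 (le_of_lt ht.1), le_trans (le_of_lt ht.2) hβ1⟩
  have hlocaff : ∀ t ∈ Ioo α β, ∃ w, (∀ᶠ s in 𝓝 t, deriv g s = w) ∧ HasDerivAt g w t := by
    intro t ht
    obtain ⟨δ, hδΓ, hev⟩ := hmid t ht
    rcases _root_.eventually_nhds_iff.mp hev with ⟨O, hOF, hOopen, hOt⟩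
    set w := lin δ (q - p) - lin γ₀ (q - p) with hw
    have hder : ∀ s ∈ ℓ ⁻¹' O, HasDerivAt g w s := by
      intro s hs
      have haff : HasDerivAt (fun r => δ (ℓ r) - γ₀ (ℓ r)) w s :=
        ((aff_hasFDerivAt δ (ℓ s)).comp_hasDerivAt s (hldgen s)).sub
          ((aff_hasFDerivAt γ₀ (ℓ s)).comp_hasDerivAt s (hldgen s))
      refine haff.congr_of_eventuallyEq ?_
      have hpre : ℓ ⁻¹' O ∈ 𝓝 s := (hOopen.preimage hℓc).mem_nhds hs
      exact Filter.eventuallyEq_of_mem hpre fun r hr => by simp [hgdef, hOF _ hr]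
    have hpre : ℓ ⁻¹' O ∈ 𝓝 t := (hOopen.preimage hℓc).mem_nhds hOt
    exact ⟨w, Filter.eventually_of_mem hpre fun s hs => (hder s hs).deriv, hder t hOt⟩
  set c₀ := deriv g tstar with hc₀
  have htsIoo : tstar ∈ Ioo α β := ⟨hα, hβ⟩
  set u : Set ℝ := {t : ℝ | ∀ᶠ s in 𝓝 t, deriv g s = c₀} with hudef
  set v : Set ℝ := ⋃ c ∈ {c : E | c ≠ c₀}, {t : ℝ | ∀ᶠ s in 𝓝 t, deriv g s = c} with hvdef
  have huo : IsOpen u := isOpen_setOf_eventually_nhds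
  have hvo : IsOpen v := isOpen_biUnion fun c _ => isOpen_setOf_eventually_nhds
  have hdisj2 : Disjoint u v := by
    rw [Set.disjoint_left]
    intro t htu htv
    simp only [hvdef, mem_iUnion, exists_prop] at htv
    obtain ⟨c, hcne, hev⟩ := htv
    exact hcne (by rw [← hev.self_of_nhds, htu.self_of_nhds])
  have hcover2 : Ioo α β ⊆ u ∪ v := by
    intro t ht
    obtain ⟨w, hevw, _⟩ := hlocaff t ht
    by_cases hc : w = c₀
    · left
      show ∀ᶠ s in 𝓝 t, deriv g s = c₀
      rw [← hc]
      exact hevw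
    · right
      simp only [hvdef, mem_iUnion, exists_prop]
      exact ⟨w, hc, hevw⟩
  have hune : (Ioo α β ∩ u).Nonempty := by
    refine ⟨tstar, htsIoo, ?_⟩
    obtain ⟨w, hevw, _⟩ := hlocaff tstar htsIoo
    have hwc : w = c₀ := (hevw.self_of_nhds).symm
    show ∀ᶠ s in 𝓝 tstar, deriv g s = c₀
    rw [← hwc]
    exact hevw
  have hIu : Ioo α β ⊆ u :=
    isPreconnected_Ioo.subset_left_of_subset_union huo hvo hdisj2 hcover2 hune
  have hderc : ∀ t ∈ Ioo α β, HasDerivAt g c₀ t := by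
    intro t ht
    obtain ⟨w, hevw, hdw⟩ := hlocaff t ht
    have hwc : w = c₀ := (hevw.self_of_nhds).symm.trans ((hIu ht).self_of_nhds)
    exact hwc ▸ hdw
  have hαI : α ∈ Icc (0:ℝ) 1 := ⟨hα0, hα.le.trans hts.2⟩
  have hG'cont : ContinuousAt G' α := by
    have h1 : ContinuousAt (fun t => fderiv ℝ F (ℓ t)) α :=
      ((hF.continuousOn_fderiv_of_isOpen hU (by simp)).continuousAt
        (hU.mem_nhds (hℓU α hαI))).comp hℓc.continuousAt
    have h2 : ContinuousAt (fun t => fderiv ℝ F (ℓ t) (q - p)) α :=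
      ((ContinuousLinearMap.apply ℝ (EuclideanSpace ℝ (Fin n)) (q - p)).continuous.continuousAt).comp h1
    exact h2.sub continuousAt_const
  have hG'eq : ∀ s ∈ Ioo α β, G' s = c₀ := fun s hs =>
    (hdiff s (hIsub hs)).unique (hderc s hs)
  have hG'α : G' α = c₀ := by
    refine eq_at_closure (g := fun _ => c₀) hG'eq ?_ hG'cont continuousAt_const
    rw [closure_Ioo (ne_of_lt hαβ)]
    exact ⟨le_refl α, hαβ.le⟩
  have hkzero : ∀ t ∈ Icc α β, g t - t • c₀ = g α - α • c₀ := by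
    apply constant_of_has_deriv_right_zero
    · have hIcc_sub : Icc α β ⊆ Icc (0:ℝ) 1 := Icc_subset_Icc hα0 hβ1
      have hgc : ContinuousOn g (Icc α β) := by
        have h1 : ContinuousOn (fun t => F (ℓ t)) (Icc α β) :=
          hF.continuousOn.comp hℓc.continuousOn fun t ht => hℓU t (hIcc_sub ht)
        exact (h1.sub ((aff_continuous γ₀).comp hℓc).continuousOn)
      exact hgc.sub (continuous_id.smul continuous_const).continuousOn
    · intro t ht
      rcases eq_or_lt_of_le ht.1 with heq | htα
      · rw [← heq]
        have h2' : HasDerivAt (fun r : ℝ => r • c₀) c₀ α := by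
          simpa using (hasDerivAt_id α).smul_const c₀
        have hd := (hdiff α hαI).sub h2'
        rw [hG'α, sub_self] at hd
        exact hd.hasDerivWithinAt
      · have h2 : HasDerivAt (fun r : ℝ => r • c₀) c₀ t := by
          simpa using (hasDerivAt_id t).smul_const c₀
        have hd := (hderc t ⟨htα, ht.2⟩).sub h2
        rw [sub_self] at hd
        exact hd.hasDerivWithinAt
  have hgα : g α = 0 := sub_eq_zero_of_eq (hgA α hαmem.1)
  have hgβ : g β = 0 := sub_eq_zero_of_eq (hgA β hβmem.1)
  have hc₀0 : c₀ = 0 := by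
    have h1 := hkzero β ⟨hαβ.le, le_refl β⟩
    rw [hgα, hgβ, zero_sub, zero_sub, neg_inj] at h1
    have h2 : (β - α) • c₀ = 0 := by
      rw [sub_smul, h1, sub_self]
    rcases smul_eq_zero.mp h2 with h | h
    · exact absurd (sub_eq_zero.mp h) (ne_of_gt hαβ)
    · exact h
  have hfin := hkzero tstar ⟨hα.le, hβ.le⟩
  rw [hgα, hc₀0, smul_zero, smul_zero, sub_zero, sub_zero] at hfin
  exact sub_eq_zero.mp hfin

end LiftIdentityAux

open LiftIdentityAux in
/-- **Lifting the identity (§3), local form.** If `F` is smooth on an open set `U ⊆ ℝⁿ` and at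
every point of `U` it agrees with the action of some element of a countable subgroup `Γ` of the
group of affine equivalences of `ℝⁿ`, then around every point of `U` the map `F` is locally equal
to the action of a single element of `Γ`. -/
theorem lift_identity_locally (n : ℕ)
    (Γ : Subgroup (EuclideanSpace ℝ (Fin n) ≃ᵃ[ℝ] EuclideanSpace ℝ (Fin n)))
    (hΓ : (Γ : Set (EuclideanSpace ℝ (Fin n) ≃ᵃ[ℝ] EuclideanSpace ℝ (Fin n))).Countable)
    (U : Set (EuclideanSpace ℝ (Fin n))) (hU : IsOpen U)
    (F : EuclideanSpace ℝ (Fin n) → EuclideanSpace ℝ (Fin n))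
    (hF : ContDiffOn ℝ (⊤ : ℕ∞) F U)
    (h : ∀ r ∈ U, ∃ γ ∈ Γ, F r = γ r) :
    ∀ r ∈ U, ∃ V : Set (EuclideanSpace ℝ (Fin n)), IsOpen V ∧ r ∈ V ∧ V ⊆ U ∧
      ∃ γ ∈ Γ, ∀ s ∈ V, F s = γ s := by
  classical
  suffices hKP : ∀ s ∈ U, LocEq Γ F s by
    intro r hr
    obtain ⟨γ, hγ, hev⟩ := hKP r hr
    rcases _root_.eventually_nhds_iff.mp hev with ⟨t, htF, hto, hrt⟩
    exact ⟨t ∩ U, hto.inter hU, ⟨hrt, hr⟩, inter_subset_right, γ, hγ, fun s hs => htF s hs.1⟩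
  by_contra hcon
  push_neg at hcon
  obtain ⟨zs, hzsU, hzsW⟩ := hcon
  -- Baire category argument on the locally closed set of "bad" points
  set Zset : Set (EuclideanSpace ℝ (Fin n)) := U ∩ {s | LocEq Γ F s}ᶜ with hZdef
  have hZlc : IsLocallyClosed Zset :=
    ⟨U, {s | LocEq Γ F s}ᶜ, hU, (isOpen_locEq Γ F).isClosed_compl, rfl⟩
  haveI : LocallyCompactSpace Zset := hZlc.locallyCompactSpace
  haveI : Nonempty Zset := ⟨⟨zs, hzsU, hzsW⟩⟩
  haveI := hΓ.to_subtype
  set f : ↥(Γ : Set (EuclideanSpace ℝ (Fin n) ≃ᵃ[ℝ] EuclideanSpace ℝ (Fin n))) → Set Zset :=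
    fun γ => {x : Zset | F ↑x = γ.1 ↑x}
    with hfdef
  have hclosed : ∀ γ, IsClosed (f γ) := by
    intro γ
    have h1 : Continuous fun x : Zset => F ↑x :=
      hF.continuousOn.comp_continuous continuous_subtype_val fun x => x.2.1
    have h2 : Continuous fun x : Zset => γ.1 ↑x :=
      (aff_continuous _).comp continuous_subtype_val
    exact isClosed_eq h1 h2
  have hcover : ⋃ γ, f γ = univ := by
    rw [eq_univ_iff_forall]
    intro x
    obtain ⟨γ, hγ, hFx⟩ := h ↑x x.2.1
    exact mem_iUnion.mpr ⟨⟨γ, hγ⟩, hFx⟩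
  obtain ⟨i, x₀, hx₀⟩ := nonempty_interior_of_iUnion_of_closed hclosed hcover
  obtain ⟨ε, hε, hball⟩ := Metric.mem_nhds_iff.mp (mem_interior_iff_mem_nhds.mp hx₀)
  set γ₀ : EuclideanSpace ℝ (Fin n) ≃ᵃ[ℝ] EuclideanSpace ℝ (Fin n) := ↑i with hγ₀def
  have hγ₀Γ : γ₀ ∈ Γ := i.2
  set z₀ : EuclideanSpace ℝ (Fin n) := ↑x₀ with hz₀def
  have hz₀U : z₀ ∈ U := x₀.2.1
  have hz₀W : ¬ LocEq Γ F z₀ := x₀.2.2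
  obtain ⟨ε', hε', hball'⟩ := Metric.isOpen_iff.mp hU z₀ hz₀U
  set ε₃ := min ε ε' with hε₃def
  have hε₃ : 0 < ε₃ := lt_min hε hε'
  set B := Metric.ball z₀ ε₃ with hBdef
  have hBU : B ⊆ U := (Metric.ball_subset_ball (min_le_right _ _)).trans hball'
  have hZB : ∀ s ∈ B, ¬ LocEq Γ F s → F s = γ₀ s := by
    intro s hsB hsW
    have hsU : s ∈ U := hBU hsB
    have hx : (⟨s, hsU, hsW⟩ : Zset) ∈ Metric.ball x₀ ε := by
      rw [Metric.mem_ball, Subtype.dist_eq]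
      exact lt_of_lt_of_le (Metric.mem_ball.mp hsB) (min_le_left _ _)
    exact hball hx
  have hz₀γ₀ : F z₀ = γ₀ z₀ := hZB z₀ (Metric.mem_ball_self hε₃) hz₀W
  set N : Set (EuclideanSpace ℝ (Fin n)) := {s | s ∈ B ∧ F s = γ₀ s} with hNdef
  have hz₀N : z₀ ∈ N := ⟨Metric.mem_ball_self hε₃, hz₀γ₀⟩
  have hBconv : Convex ℝ B := convex_ball z₀ ε₃
  have hNconv : Convex ℝ N := by
    rw [convex_iff_segment_subset]
    intro a ha b hb
    have hsB : segment ℝ a b ⊆ B := hBconv.segment_subset ha.1 hb.1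
    have hdisj' : ∀ s ∈ segment ℝ a b, LocEq Γ F s ∨ F s = γ₀ s := by
      intro y hy
      by_cases hl : LocEq Γ F y
      · exact Or.inl hl
      · exact Or.inr (hZB y (hsB hy) hl)
    have hFseg := seg_zero hU hF Γ γ₀ (hsB.trans hBU) hdisj' ha.2 hb.2
    exact fun s hs => ⟨hsB hs, hFseg s hs⟩
  have hsegB : ∀ x : EuclideanSpace ℝ (Fin n), x ∈ B →
      ∀ t ∈ Icc (0:ℝ) 1, x + t • (z₀ - x) ∈ B := by
    intro x hx t ht
    have hmem : x + t • (z₀ - x) ∈ segment ℝ x z₀ := by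
      rw [segment_eq_image']
      exact mem_image_of_mem _ ht
    exact hBconv.segment_subset hx (Metric.mem_ball_self hε₃) hmem
  apply hz₀W
  suffices hex : ∃ γ ∈ Γ, ∀ s ∈ B, F s = γ s by
    obtain ⟨γ, hγ, hall⟩ := hex
    exact ⟨γ, hγ,
      _root_.eventually_nhds_iff.mpr ⟨B, hall, Metric.isOpen_ball, Metric.mem_ball_self hε₃⟩⟩
  by_cases hint : (interior N).Nonempty
  · -- Case A : `N` has nonempty interior; then `F = γ₀` on all of `B`.
    obtain ⟨y₀, hy₀⟩ := hint
    refine ⟨γ₀, hγ₀Γ, ?_⟩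
    intro x hx
    by_cases hxc : x ∈ closure N
    · exact eq_at_closure (fun y hy => hy.2) hxc
        (hF.continuousOn.continuousAt (hU.mem_nhds (hBU hx))) (aff_continuous γ₀).continuousAt
    · set T : Set ℝ := Icc (0:ℝ) 1 ∩ (fun t : ℝ => x + t • (z₀ - x)) ⁻¹' closure N with hTdef
      have hTclosed : IsClosed T :=
        isClosed_Icc.inter (isClosed_closure.preimage (by fun_prop))
      have hT1 : (1:ℝ) ∈ T := ⟨⟨zero_le_one, le_refl 1⟩, by
        simpa using subset_closure hz₀N⟩
      have hTbdd : BddBelow T := ⟨0, fun y hy => hy.1.1⟩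
      set th := sInf T with hthdef
      have hthT : th ∈ T := hTclosed.csInf_mem ⟨1, hT1⟩ hTbdd
      have hthpos : 0 < th := by
        rcases lt_or_eq_of_le hthT.1.1 with hlt | heq
        · exact hlt
        · exfalso
          apply hxc
          have hmm := hthT.2
          rw [← heq] at hmm
          simpa using hmm
      set pp := x + th • (z₀ - x) with hppdef
      have hppB : pp ∈ B := hsegB x hx th hthT.1
      have hppU : pp ∈ U := hBU hppB
      have hseg : ∀ t ∈ Ico (0:ℝ) 1, LocEq Γ F (x + t • (pp - x)) := by
        intro t ht
        have hrw : x + t • (pp - x) = x + (t * th) • (z₀ - x) := by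
          have h1 : pp - x = th • (z₀ - x) := by
            rw [hppdef, add_sub_cancel_left]
          rw [h1, smul_smul]
        rw [hrw]
        have htt : t * th ∈ Icc (0:ℝ) 1 :=
          ⟨mul_nonneg ht.1 hthpos.le,
            le_trans (mul_le_of_le_one_left hthpos.le ht.2.le) hthT.1.2⟩
        have hlt : t * th < th := mul_lt_of_lt_one_left hthpos ht.2
        have hnotc : x + (t * th) • (z₀ - x) ∉ closure N := fun hc =>
          absurd (csInf_le hTbdd ⟨htt, hc⟩) (not_le.mpr hlt)
        have hmemB : x + (t * th) • (z₀ - x) ∈ B := hsegB x hx _ htt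
        by_contra hnl
        exact hnotc (subset_closure ⟨hmemB, hZB _ hmemB hnl⟩)
      obtain ⟨δ, hδΓ, hev⟩ := germ_const Γ F x pp hseg
      obtain ⟨hFx, hFpp, hfd⟩ := germ_jet hU hF hppU δ hev
      have hppc : pp ∈ closure N := hthT.2
      have hcF : ContinuousAt F pp := hF.continuousOn.continuousAt (hU.mem_nhds hppU)
      have hFppγ : F pp = γ₀ pp :=
        eq_at_closure (fun y hy => hy.2) hppc hcF (aff_continuous γ₀).continuousAt
      have hppci : pp ∈ closure (interior N) := by
        haveI hne : (𝓝[Ico (0:ℝ) 1] (1:ℝ)).NeBot := by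
          refine mem_closure_iff_nhdsWithin_neBot.mp ?_
          rw [closure_Ico (zero_ne_one (α := ℝ))]
          exact ⟨zero_le_one, le_refl 1⟩
        refine mem_closure_of_tendsto (b := 𝓝[Ico (0:ℝ) 1] (1:ℝ)) (f := fun b : ℝ => (1 - b) • y₀ + b • pp) ?_ ?_
        · have hc : Continuous fun b : ℝ => (1 - b) • y₀ + b • pp := by fun_prop
          have hct := hc.tendsto 1
          simp only [sub_self, zero_smul, one_smul, zero_add] at hct
          exact hct.mono_left nhdsWithin_le_nhds
        · exact eventually_mem_nhdsWithin.mono fun b hb =>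
            hNconv.combo_interior_closure_mem_interior hy₀ hppc
              (by linarith [hb.2]) hb.1 (by ring)
      have hfdγ : fderiv ℝ F pp = lin γ₀ := by
        refine eq_at_closure (g := fun _ => lin γ₀) ?_ hppci
          ((hF.continuousOn_fderiv_of_isOpen hU (by simp)).continuousAt (hU.mem_nhds hppU))
          continuousAt_const
        intro y hy
        have hevy : F =ᶠ[𝓝 y] ⇑γ₀ :=
          _root_.eventually_nhds_iff.mpr
            ⟨interior N, fun z hz => (interior_subset hz).2, isOpen_interior, hy⟩
        rw [hevy.fderiv_eq, (aff_hasFDerivAt γ₀ y).fderiv]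
      have hδγ : (⇑δ : EuclideanSpace ℝ (Fin n) → EuclideanSpace ℝ (Fin n)) = ⇑γ₀ :=
        aff_eq_of δ γ₀ pp (hFpp.symm.trans hFppγ) (by rw [← hfd]; exact hfdγ)
      exact hFx.trans (congrFun hδγ x)
  · -- Case B : `N` has empty interior; `F` equals the `1`-jet of `F` at `z₀` on `B`.
    have hint' : interior N = ∅ := not_nonempty_iff_eq_empty.mp hint
    have hPne : affineSpan ℝ N ≠ ⊤ := by
      intro htop
      have hcon2 := (hNconv.interior_nonempty_iff_affineSpan_eq_top).mpr htop
      rw [hint'] at hcon2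
      exact Set.not_nonempty_empty hcon2
    have hz₀P : z₀ ∈ affineSpan ℝ N := subset_affineSpan ℝ N hz₀N
    obtain ⟨v, hv⟩ : ∃ v : EuclideanSpace ℝ (Fin n), v ∉ (affineSpan ℝ N).direction := by
      by_contra hc
      push_neg at hc
      exact hPne ((AffineSubspace.direction_eq_top_iff_of_nonempty ⟨z₀, hz₀P⟩).mp
        (Submodule.eq_top_iff'.mpr hc))
    have hv0 : v ≠ 0 := fun h0 => hv (h0 ▸ (affineSpan ℝ N).direction.zero_mem)
    have hoffP : ∀ (y : EuclideanSpace ℝ (Fin n)) (c : ℝ), y ∈ affineSpan ℝ N → c ≠ 0 →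
        y + c • v ∉ affineSpan ℝ N := by
      intro y c hy hc hmem
      apply hv
      have h1 : (y + c • v) -ᵥ y ∈ (affineSpan ℝ N).direction :=
        AffineSubspace.vsub_mem_direction hmem hy
      have h2 : (y + c • v) -ᵥ y = c • v := by
        rw [vsub_eq_sub, add_sub_cancel_left]
      rw [h2] at h1
      have h3 := (affineSpan ℝ N).direction.smul_mem c⁻¹ h1
      rwa [smul_smul, inv_mul_cancel₀ hc, one_smul] at h3
    have hjet : ∀ x, x ∈ B → x ∉ affineSpan ℝ N →
        ∃ δ, δ ∈ Γ ∧ F x = δ x ∧ F z₀ = δ z₀ ∧ fderiv ℝ F z₀ = lin δ := by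
      intro x hxB hxP
      have hseg : ∀ t ∈ Ico (0:ℝ) 1, LocEq Γ F (x + t • (z₀ - x)) := by
        intro t ht
        have hyB : x + t • (z₀ - x) ∈ B := hsegB x hxB t ⟨ht.1, ht.2.le⟩
        have hyP : x + t • (z₀ - x) ∉ affineSpan ℝ N := by
          intro hyP
          apply hxP
          have h1 : z₀ -ᵥ (x + t • (z₀ - x)) ∈ (affineSpan ℝ N).direction :=
            AffineSubspace.vsub_mem_direction hz₀P hyP
          have h2 : z₀ -ᵥ (x + t • (z₀ - x)) = (1 - t) • (z₀ - x) := by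
            rw [vsub_eq_sub]
            module
          rw [h2] at h1
          have hne1t : (1:ℝ) - t ≠ 0 := ne_of_gt (by linarith [ht.2])
          have h3 := (affineSpan ℝ N).direction.smul_mem ((1:ℝ) - t)⁻¹ h1
          rw [smul_smul, inv_mul_cancel₀ hne1t, one_smul] at h3
          have h4 := AffineSubspace.vadd_mem_of_mem_direction
            ((affineSpan ℝ N).direction.neg_mem h3) hz₀P
          have h5 : -(z₀ - x) +ᵥ z₀ = x := by
            rw [vadd_eq_add]
            module
          rwa [h5] at h4
        have hyN : x + t • (z₀ - x) ∉ N := fun hyN => hyP (subset_affineSpan ℝ N hyN)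
        by_contra hnl
        exact hyN ⟨hyB, hZB _ hyB hnl⟩
      obtain ⟨δ, hδΓ, hev⟩ := germ_const Γ F x z₀ hseg
      obtain ⟨hFx, hFz, hfd⟩ := germ_jet hU hF hz₀U δ hev
      exact ⟨δ, hδΓ, hFx, hFz, hfd⟩
    have hnv : ‖v‖ ≠ 0 := norm_ne_zero_iff.mpr hv0
    set c1 : ℝ := ε₃ / (2 * ‖v‖) with hc1def
    have hc1pos : 0 < c1 := by
      apply div_pos hε₃
      positivity
    set x₁ := z₀ + c1 • v with hx₁def
    have hx₁B : x₁ ∈ B := by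
      have hnorm : dist x₁ z₀ = c1 * ‖v‖ := by
        rw [hx₁def, dist_eq_norm, add_sub_cancel_left, norm_smul, Real.norm_eq_abs,
          abs_of_pos hc1pos]
      have hval : c1 * ‖v‖ = ε₃ / 2 := by
        rw [hc1def]
        field_simp
      rw [hBdef, Metric.mem_ball, hnorm, hval]
      linarith
    have hx₁P : x₁ ∉ affineSpan ℝ N := hoffP z₀ c1 hz₀P (ne_of_gt hc1pos)
    obtain ⟨δs, hδsΓ, hFx₁, hFzδ, hfdδ⟩ := hjet x₁ hx₁B hx₁P
    refine ⟨δs, hδsΓ, ?_⟩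
    have hBoff : ∀ x, x ∈ B → x ∉ affineSpan ℝ N → F x = δs x := by
      intro x hxB hxP
      obtain ⟨δ, hδΓ, hFx, hFz, hfd⟩ := hjet x hxB hxP
      have hde : (⇑δ : EuclideanSpace ℝ (Fin n) → EuclideanSpace ℝ (Fin n)) = ⇑δs :=
        aff_eq_of δ δs z₀ (hFz.symm.trans hFzδ) (by rw [← hfd]; exact hfdδ)
      exact hFx.trans (congrFun hde x)
    intro x hxB
    by_cases hxP : x ∈ affineSpan ℝ N
    · have htend : Tendsto (fun t : ℝ => x + t • v) (𝓝[>] (0:ℝ)) (𝓝 x) := by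
        have hc : Continuous fun t : ℝ => x + t • v := by fun_prop
        have hct := hc.tendsto 0
        simp only [zero_smul, add_zero] at hct
        exact hct.mono_left nhdsWithin_le_nhds
      have hxcl : x ∈ closure {y | y ∈ B ∧ y ∉ affineSpan ℝ N} := by
        refine mem_closure_of_tendsto htend ?_
        have hBev : ∀ᶠ t in 𝓝[>] (0:ℝ), x + t • v ∈ B :=
          htend.eventually (Metric.isOpen_ball.eventually_mem hxB)
        have hPev : ∀ᶠ t in 𝓝[>] (0:ℝ), x + t • v ∉ affineSpan ℝ N :=
          eventually_mem_nhdsWithin.mono fun t ht => hoffP x t hxP (ne_of_gt ht)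
        exact hBev.and hPev
      exact eq_at_closure (fun y hy => hBoff y hy.1 hy.2) hxcl
        (hF.continuousOn.continuousAt (hU.mem_nhds (hBU hxB))) (aff_continuous δs).continuousAt
    · exact hBoff x hxB hxP
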